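/- The operator T = p₂·z²∂²_z + p₁·(z∂²_z - ∂_z) + p₀·(∂²_z - 2z⁻¹∂_z) + q₂·z∂_z maps the exceptional monomial module 𝒫⁽¹⁾ₙ = span{1, z², …, zⁿ} into itself for every n ≥ 2 and all real coefficients p₀, p₁, p₂, q₂; in particular, T preserves the infinite flag 𝒫⁽¹⁾₀ ⊂ 𝒫⁽¹⁾₂ ⊂ 𝒫⁽¹⁾₃ ⊂ ⋯. -/
import Mathlib


open Polynomial

/-- The exceptional monomial module 𝒫⁽¹⁾ₙ = span{1, z², z³, …, zⁿ}. -/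
noncomputable def excModule (n : ℕ) : Submodule ℝ (Polynomial ℝ) :=
  Submodule.span ℝ ({1} ∪ {f | ∃ k : ℕ, 2 ≤ k ∧ k ≤ n ∧ f = X ^ k})

/-- T = p₂·z²∂² + p₁·(z∂² - ∂) + p₀·(∂² - 2z⁻¹∂) + q₂·z∂, acting on polynomials;
z⁻¹∂ is realized by divX ∘ derivative, which agrees with multiplication by z⁻¹ on
polynomials whose derivative has zero constant term (e.g. all elements of 𝒫⁽¹⁾ₙ). -/
noncomputable def excOp (p₀ p₁ p₂ q₂ : ℝ) (f : Polynomial ℝ) : Polynomial ℝ :=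
  C p₂ * X ^ 2 * derivative (derivative f)
    + C p₁ * (X * derivative (derivative f) - derivative f)
    + C p₀ * (derivative (derivative f) - 2 * (derivative f).divX)
    + C q₂ * X * derivative f

lemma excOp_X_pow (p₀ p₁ p₂ q₂ : ℝ) (m : ℕ) :
    excOp p₀ p₁ p₂ q₂ (X ^ (m+2)) =
      C (p₂*((m:ℝ)+2)*((m:ℝ)+1) + q₂*((m:ℝ)+2)) * X^(m+2)
      + C (p₁*((m:ℝ)+2)*(m:ℝ)) * X^(m+1)
      + C (p₀*((m:ℝ)+2)*((m:ℝ)-1)) * X^m := by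
  have h1 : derivative (X^(m+2) : ℝ[X]) = C ((m:ℝ)+2) * X^(m+1) := by
    rw [derivative_X_pow]; push_cast; ring_nf
  have h2 : derivative (C ((m:ℝ)+2) * X^(m+1)) = C (((m:ℝ)+2)*((m:ℝ)+1)) * X^m := by
    rw [derivative_C_mul, derivative_X_pow, Nat.add_sub_cancel, ← mul_assoc, ← C_mul]
    push_cast; ring_nf
  have h3 : divX (C ((m:ℝ)+2) * X^(m+1)) = C ((m:ℝ)+2) * X^m := by
    rw [divX_C_mul, divX_X_pow]; simp
  rw [excOp, h1, h2, h3]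
  simp only [C_add, C_mul, C_sub, C_1]
  ring

lemma excOp_add (p₀ p₁ p₂ q₂ : ℝ) (f g : Polynomial ℝ) :
    excOp p₀ p₁ p₂ q₂ (f + g) = excOp p₀ p₁ p₂ q₂ f + excOp p₀ p₁ p₂ q₂ g := by
  simp only [excOp, derivative_add, divX_add]; ring

lemma excOp_smul (p₀ p₁ p₂ q₂ c : ℝ) (f : Polynomial ℝ) :
    excOp p₀ p₁ p₂ q₂ (c • f) = c • excOp p₀ p₁ p₂ q₂ f := by
  simp only [excOp, smul_eq_C_mul, derivative_C_mul, divX_C_mul]; ring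

/-- the operator T maps 𝒫⁽¹⁾ₙ into itself for every n ≥ 2 and all real
coefficients p₀, p₁, p₂, q₂; in particular T preserves the flag 𝒫⁽¹⁾₀ ⊂ 𝒫⁽¹⁾₂ ⊂ 𝒫⁽¹⁾₃ ⊂ ⋯ . -/
theorem excOp_preserves_exceptional_flag
    (p₀ p₁ p₂ q₂ : ℝ) :
    ∀ n : ℕ, 2 ≤ n → ∀ f ∈ excModule n, excOp p₀ p₁ p₂ q₂ f ∈ excModule n := by
  intro n hn f hf
  have h1mem : (1 : ℝ[X]) ∈ excModule n := Submodule.subset_span (Or.inl rfl)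
  have hXmem : ∀ j : ℕ, 2 ≤ j → j ≤ n → (X ^ j : ℝ[X]) ∈ excModule n :=
    fun j hj1 hj2 => Submodule.subset_span (Or.inr ⟨j, hj1, hj2, rfl⟩)
  induction hf using Submodule.span_induction with
  | mem g hg =>
    rcases hg with hg | ⟨k, hk2, hkn, rfl⟩
    · -- g = 1
      simp only [Set.mem_singleton_iff] at hg
      subst hg
      have : excOp p₀ p₁ p₂ q₂ 1 = 0 := by simp [excOp]
      rw [this]; exact zero_mem _
    · -- g = X ^ k with 2 ≤ k ≤ n
      obtain ⟨m, rfl⟩ := Nat.exists_eq_add_of_le hk2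
      rw [Nat.add_comm 2 m] at hkn ⊢
      rw [excOp_X_pow]
      refine add_mem (add_mem ?_ ?_) ?_
      · rw [← smul_eq_C_mul]
        exact Submodule.smul_mem _ _ (hXmem (m+2) (by omega) hkn)
      · rcases Nat.eq_zero_or_pos m with hm | hm
        · subst hm; simp
        · rw [← smul_eq_C_mul]
          exact Submodule.smul_mem _ _ (hXmem (m+1) (by omega) (by omega))
      · rcases Nat.lt_or_ge m 2 with hm | hm
        · interval_cases m
          · have h := Submodule.smul_mem (excModule n) (p₀*((0:ℝ)+2)*((0:ℝ)-1)) h1mem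
            rw [smul_eq_C_mul, mul_one] at h
            simpa using h
          · simp
        · rw [← smul_eq_C_mul]
          exact Submodule.smul_mem _ _ (hXmem m hm (by omega))
  | zero =>
    have : excOp p₀ p₁ p₂ q₂ 0 = 0 := by simp [excOp]
    rw [this]; exact zero_mem _
  | add f g _ _ hf hg => rw [excOp_add]; exact add_mem hf hg
  | smul c f _ hf => rw [excOp_smul]; exact Submodule.smul_mem _ _ hf
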